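/- Let (A_n) be a stationary sequence of topical operators with φ-mixing coefficients φ_n, and suppose for some n_0 we have φ_{n_0} + P(rk(A_{n_0}⋯A_1) ≠ 1) < 1. Then P(rk(A_n⋯A_1) ≠ 1) decreases exponentially fast in n; in particular Σ_n √(P(rk(A_{⌊n/2⌋}⋯A_1) ≠ 1)) < ∞. -/

import Mathlib

/-!
If `A_{n+2n₀} ⋯ A_1` is not of rank one, then neither is the past product `A_n ⋯ A_1` nor the
future product `A_{n+2n₀} ⋯ A_{n+n₀+1}`, which is separated from it by a gap of length `n₀`.
`φ`-mixing and stationarity therefore give `p_{n+2n₀} ≤ (φ_{n₀} + p_{n₀}) p_n` for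
`p_n = P(rk(A_n ⋯ A_1) ≠ 1)`, and as `p_n` is nonincreasing this recursion forces geometric
decay. Square roots of a geometrically decaying sequence still decay geometrically, and reading
a summable sequence at `⌊n/2⌋` only counts each term twice.
-/

open MeasureTheory Filter

/-- A map on `ℝ^d` is *topical* if it is isotone and additively homogeneous. -/
def Topical (d : ℕ) (A : (Fin d → ℝ) → (Fin d → ℝ)) : Prop :=
  (∀ x y : Fin d → ℝ, x ≤ y → A x ≤ A y) ∧
  (∀ (x : Fin d → ℝ) (a : ℝ), A (x + fun _ => a) = A x + fun _ => a)

/-- `compOp A s n = A_{s+n-1} ∘ ⋯ ∘ A_s`. -/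
def compOp {d : ℕ} (A : ℕ → (Fin d → ℝ) → (Fin d → ℝ)) (s : ℕ) :
    ℕ → (Fin d → ℝ) → (Fin d → ℝ)
  | 0 => id
  | n + 1 => A (s + n) ∘ compOp A s n

/-- `θ` has rank 1: the induced map on `ℝ^d / ℝ·1` is constant. -/
def Rank1 (d : ℕ) (θ : (Fin d → ℝ) → (Fin d → ℝ)) : Prop :=
  ∀ x y : Fin d → ℝ, ∃ a : ℝ, θ x = θ y + fun _ => a

/-- `pbad μ op n = P(rk(A_n ⋯ A_1) ≠ 1)` on the canonical sequence space, with
`A_m(ω) = op (ω m)`. -/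
noncomputable def pbad {E : Type*} [MeasurableSpace E] (d : ℕ)
    (μ : Measure (ℕ → E)) (op : E → (Fin d → ℝ) → (Fin d → ℝ)) (n : ℕ) : ℝ :=
  (μ {ω | ¬ Rank1 d (compOp (fun m => op (ω m)) 1 n)}).toReal

lemma exists_geometric_bound_of_le_mul {p : ℕ → ℝ} (hanti : Antitone p)
    (hp0 : ∀ n, 0 ≤ p n) (hp1 : p 0 ≤ 1) {q : ℝ} (hq : q < 1) {m : ℕ}
    (hrec : ∀ n, p (n + m) ≤ q * p n) :
    ∃ c r : ℝ, 0 < c ∧ 0 < r ∧ r < 1 ∧ ∀ n, p n ≤ c * r ^ n := by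
  -- By monotonicity the recursion survives passing to the step `m + 1 > 0` and the ratio
  -- `Q = max q ½ > 0`.
  set k := m + 1
  set Q := max q (1 / 2)
  have hQ0 : 0 < Q := lt_max_of_lt_right (by norm_num)
  have hQ1 : Q < 1 := max_lt hq (by norm_num)
  have hstep : ∀ n, p (n + k) ≤ Q * p n := fun n =>
    (hanti (Nat.le_succ _)).trans <|
      (hrec n).trans (mul_le_mul_of_nonneg_right (le_max_left _ _) (hp0 n))
  have hmul : ∀ j, p (k * j) ≤ Q ^ j := by
    intro j
    induction j with
    | zero => simpa using hp1
    | succ j ih =>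
      calc p (k * (j + 1)) = p (k * j + k) := by rw [mul_add_one]
        _ ≤ Q * p (k * j) := hstep _
        _ ≤ Q * Q ^ j := mul_le_mul_of_nonneg_left ih hQ0.le
        _ = Q ^ (j + 1) := (pow_succ' Q j).symm
  set r := Q ^ ((k : ℝ)⁻¹)
  have hr0 : 0 < r := Real.rpow_pos_of_pos hQ0 _
  have hr1 : r < 1 := Real.rpow_lt_one hQ0.le hQ1 (by positivity)
  have hrk : r ^ k = Q := Real.rpow_inv_natCast_pow hQ0.le (Nat.succ_ne_zero m)
  refine ⟨Q⁻¹, r, inv_pos.mpr hQ0, hr0, hr1, fun n => ?_⟩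
  rw [le_inv_mul_iff₀ hQ0]
  calc Q * p n ≤ r ^ k * r ^ (k * (n / k)) := by
        rw [hrk, pow_mul, hrk]
        exact mul_le_mul_of_nonneg_left
          ((hanti (Nat.mul_div_le n k)).trans (hmul _)) hQ0.le
    _ ≤ r ^ (n % k) * r ^ (k * (n / k)) := mul_le_mul_of_nonneg_right
        (pow_le_pow_of_le_one hr0.le hr1.le (Nat.mod_lt n (Nat.succ_pos m)).le) (by positivity)
    _ = r ^ n := by rw [← pow_add, Nat.mod_add_div]

lemma Summable.comp_div_two {M : Type*} [AddCommMonoid M] [TopologicalSpace M]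
    [ContinuousAdd M] {f : ℕ → M} (hf : Summable f) : Summable fun n => f (n / 2) := by
  have heven : ∀ k, 2 * k / 2 = k := by omega
  have hodd : ∀ k, (2 * k + 1) / 2 = k := by omega
  exact .even_add_odd (by simpa only [heven] using hf) (by simpa only [hodd] using hf)

lemma summable_sqrt_comp_div_two_of_le_geometric {p : ℕ → ℝ} {c r : ℝ} (hr0 : 0 ≤ r)
    (hr1 : r < 1) (hp : ∀ n, p n ≤ c * r ^ n) : Summable fun n => √(p (n / 2)) := by
  refine Summable.comp_div_two (f := fun n => √(p n)) ?_
  have hsqrt_r : √r < 1 := (Real.sqrt_lt' one_pos).mpr (by simpa using hr1)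
  refine Summable.of_nonneg_of_le (fun _ => Real.sqrt_nonneg _) (fun n => ?_)
    ((summable_geometric_of_lt_one (Real.sqrt_nonneg r) hsqrt_r).mul_left √c)
  calc √(p n) ≤ √(c * r ^ n) := Real.sqrt_le_sqrt (hp n)
    _ = √c * √r ^ n := by
      rw [Real.sqrt_mul' c (pow_nonneg hr0 n)]
      congr 1
      rw [Real.sqrt_eq_iff_mul_self_eq (pow_nonneg hr0 n) (by positivity), ← mul_pow,
        Real.mul_self_sqrt hr0]

section Composition

variable {d : ℕ}

lemma compOp_congr {A B : ℕ → (Fin d → ℝ) → (Fin d → ℝ)} {s : ℕ} (n : ℕ)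
    (h : ∀ m, s ≤ m → m < s + n → A m = B m) : compOp A s n = compOp B s n := by
  induction n with
  | zero => rfl
  | succ n ih =>
    rw [compOp, compOp, ih fun m h1 h2 => h m h1 (by omega), h (s + n) (by omega) (by omega)]

lemma compOp_add (A : ℕ → (Fin d → ℝ) → (Fin d → ℝ)) (s m k : ℕ) :
    compOp A s (m + k) = compOp A (s + m) k ∘ compOp A s m := by
  induction k with
  | zero => rfl
  | succ k ih => rw [← add_assoc, compOp, compOp, ih, add_assoc]; rfl

lemma compOp_shift (A : ℕ → (Fin d → ℝ) → (Fin d → ℝ)) (k s n : ℕ) :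
    compOp (fun m => A (m + k)) s n = compOp A (s + k) n := by
  induction n with
  | zero => rfl
  | succ n ih => rw [compOp, compOp, ih, add_right_comm]

lemma compOp_add_const {A : ℕ → (Fin d → ℝ) → (Fin d → ℝ)}
    (hA : ∀ m x (a : ℝ), A m (x + fun _ => a) = A m x + fun _ => a) (s n : ℕ)
    (x : Fin d → ℝ) (a : ℝ) : compOp A s n (x + fun _ => a) = compOp A s n x + fun _ => a := by
  induction n with
  | zero => rfl
  | succ n ih => simp only [compOp, Function.comp_apply, ih, hA]

lemma Rank1.comp_left {ψ : (Fin d → ℝ) → (Fin d → ℝ)} (h : Rank1 d ψ)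
    (θ : (Fin d → ℝ) → (Fin d → ℝ)) : Rank1 d (ψ ∘ θ) :=
  fun x y => h (θ x) (θ y)

lemma Rank1.comp_right {θ : (Fin d → ℝ) → (Fin d → ℝ)} (h : Rank1 d θ)
    {ψ : (Fin d → ℝ) → (Fin d → ℝ)}
    (hψ : ∀ x (a : ℝ), ψ (x + fun _ => a) = ψ x + fun _ => a) : Rank1 d (ψ ∘ θ) := by
  intro x y
  obtain ⟨a, ha⟩ := h x y
  exact ⟨a, by simp only [Function.comp_apply, ha, hψ]⟩

end Composition

section NonRank1

variable {E : Type*} {d : ℕ} (op : E → (Fin d → ℝ) → (Fin d → ℝ))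

/-- The event `rk(A_{s+n-1} ⋯ A_s) ≠ 1`, with `A_m(ω) = op (ω m)`. -/
def nonRank1Set (s n : ℕ) : Set (ℕ → E) :=
  {ω | ¬ Rank1 d (compOp (fun m => op (ω m)) s n)}

variable {op}

lemma nonRank1Set_succ_eq_preimage (s n : ℕ) :
    nonRank1Set op (s + 1) n = (fun ω (i : ℕ) => ω (i + 1)) ⁻¹' nonRank1Set op s n := by
  ext ω
  simp only [nonRank1Set, Set.mem_preimage, Set.mem_ofPred_eq]
  rw [compOp_shift (fun m => op (ω m)) 1 s n]

lemma mem_nonRank1Set_congr {s n : ℕ} {ω ω' : ℕ → E}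
    (h : ∀ m, s ≤ m → m < s + n → ω m = ω' m) :
    ω ∈ nonRank1Set op s n ↔ ω' ∈ nonRank1Set op s n := by
  simp only [nonRank1Set, Set.mem_ofPred_eq,
    compOp_congr n fun m h1 h2 => congrArg op (h m h1 h2)]

lemma nonRank1Set_succ_subset (hop : ∀ e x (a : ℝ), op e (x + fun _ => a) = op e x + fun _ => a)
    (s n : ℕ) : nonRank1Set op s (n + 1) ⊆ nonRank1Set op s n :=
  fun ω hω hrank => hω (hrank.comp_right (hop (ω (s + n))))

/-- Rank one persists under composition on either side. -/
lemma nonRank1Set_add_add_subset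
    (hop : ∀ e x (a : ℝ), op e (x + fun _ => a) = op e x + fun _ => a) (s a b c : ℕ) :
    nonRank1Set op s (a + b + c) ⊆ nonRank1Set op s a ∩ nonRank1Set op (s + a + b) c := by
  intro ω hω
  refine ⟨fun hrank => hω ?_, fun hrank => hω ?_⟩
  · rw [add_assoc, compOp_add _ s a]
    exact hrank.comp_right (compOp_add_const (fun m => hop (ω m)) _ _)
  · rw [compOp_add _ s (a + b), ← add_assoc]
    exact hrank.comp_left _

end NonRank1

section Measure

variable {E : Type*} [MeasurableSpace E]

lemma MeasurableSet.of_comap_shift {s : ℕ} {t : Set (ℕ → E)}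
    (ht : MeasurableSet[MeasurableSpace.comap (fun ω (i : ℕ) => ω (s + i)) inferInstance] t) :
    MeasurableSet t :=
  (measurable_pi_lambda _ fun _ => measurable_pi_apply _).comap_le t ht

lemma MeasurableSet.comap_restrict_of_mem_congr {k : ℕ} {t : Set (ℕ → E)}
    (ht : MeasurableSet t) (hdep : ∀ ω ω', (∀ i ≤ k, ω i = ω' i) → (ω ∈ t ↔ ω' ∈ t)) :
    MeasurableSet[MeasurableSpace.comap (fun ω (i : Fin (k + 1)) => ω i) inferInstance] t := by
  let extend : (Fin (k + 1) → E) → ℕ → E := fun v i => v ⟨min i k, by omega⟩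
  refine ⟨extend ⁻¹' t, (measurable_pi_lambda _ fun _ => measurable_pi_apply _) ht, ?_⟩
  ext ω
  exact hdep _ ω fun i hi => by simp only [extend, min_eq_left hi]

variable {d : ℕ} {op : E → (Fin d → ℝ) → (Fin d → ℝ)} {μ : Measure (ℕ → E)}

lemma measure_nonRank1Set_eq_start_zero
    (hshift : MeasurePreserving (fun ω (n : ℕ) => ω (n + 1)) μ μ)
    (hmeas : ∀ s n, MeasurableSet (nonRank1Set op s n)) (s n : ℕ) :
    μ (nonRank1Set op s n) = μ (nonRank1Set op 0 n) := by
  induction s with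
  | zero => rfl
  | succ s ih =>
    rw [nonRank1Set_succ_eq_preimage, hshift.measure_preimage (hmeas s n).nullMeasurableSet, ih]

lemma antitone_pbad [IsFiniteMeasure μ]
    (hop : ∀ e x (a : ℝ), op e (x + fun _ => a) = op e x + fun _ => a) :
    Antitone (pbad d μ op) :=
  antitone_nat_of_succ_le fun n =>
    ENNReal.toReal_mono (measure_ne_top _ _) (measure_mono (nonRank1Set_succ_subset hop 1 n))

/-- One application of `φ`-mixing: the windows `[1, n]` and `[n + g + 1, n + g + m]` are
separated by a gap of length `g`. -/
lemma pbad_add_add_le [IsFiniteMeasure μ]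
    (hshift : MeasurePreserving (fun ω (n : ℕ) => ω (n + 1)) μ μ)
    (hop : ∀ e x (a : ℝ), op e (x + fun _ => a) = op e x + fun _ => a)
    (hmeas : ∀ s n : ℕ,
      MeasurableSet[MeasurableSpace.comap (fun ω (i : ℕ) => ω (s + i)) inferInstance]
        (nonRank1Set op s n))
    {φ : ℕ → ℝ}
    (hφ : ∀ (k n : ℕ) (s t : Set (ℕ → E)),
      MeasurableSet[MeasurableSpace.comap (fun ω (i : Fin k) => ω i) inferInstance] s →
      MeasurableSet[MeasurableSpace.comap (fun ω (i : ℕ) => ω (k + n + i)) inferInstance] t →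
      |(μ (s ∩ t)).toReal - (μ s).toReal * (μ t).toReal| ≤ φ n * (μ s).toReal)
    (n g m : ℕ) :
    pbad d μ op (n + g + m) ≤ (φ g + pbad d μ op m) * pbad d μ op n := by
  set past := nonRank1Set op 1 n
  set future := nonRank1Set op (n + 1 + g) m
  have hpast := (MeasurableSet.of_comap_shift (hmeas 1 n)).comap_restrict_of_mem_congr
    (k := n) fun ω ω' h => mem_nonRank1Set_congr fun i _ hi => h i (by omega)
  have hfuture : (μ future).toReal = pbad d μ op m := by
    have hstat := measure_nonRank1Set_eq_start_zero hshift fun s n => .of_comap_shift (hmeas s n)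
    show _ = (μ (nonRank1Set op 1 m)).toReal
    rw [hstat, hstat 1]
  have hsub : nonRank1Set op 1 (n + g + m) ⊆ past ∩ future := by
    simpa only [add_comm 1 n] using nonRank1Set_add_add_subset hop 1 n g m
  have hmix := (abs_le.mp (hφ (n + 1) g past future hpast (hmeas _ m))).2
  calc pbad d μ op (n + g + m) ≤ (μ (past ∩ future)).toReal :=
        ENNReal.toReal_mono (measure_ne_top _ _) (measure_mono hsub)
    _ ≤ (μ past).toReal * (μ future).toReal + φ g * (μ past).toReal := by linarith
    _ = (φ g + pbad d μ op m) * (μ past).toReal := by rw [hfuture]; ring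

end Measure

theorem rank1_probability_exponential_decay_general {E : Type*} [MeasurableSpace E]
    {d : ℕ}
    (μ : Measure (ℕ → E)) [IsProbabilityMeasure μ]
    (hshift : MeasurePreserving (fun ω (n : ℕ) => ω (n + 1)) μ μ)
    (op : E → (Fin d → ℝ) → (Fin d → ℝ)) (hop : ∀ e, Topical d (op e))
    (hmeas : ∀ s n : ℕ,
      MeasurableSet[MeasurableSpace.comap (fun ω (i : ℕ) => ω (s + i))
          inferInstance]
        {ω : ℕ → E | ¬ Rank1 d (compOp (fun m => op (ω m)) s n)})
    (φ : ℕ → ℝ)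
    (hφ : ∀ (k n : ℕ) (s t : Set (ℕ → E)),
      MeasurableSet[MeasurableSpace.comap (fun ω (i : Fin k) => ω i)
          inferInstance] s →
      MeasurableSet[MeasurableSpace.comap (fun ω (i : ℕ) => ω (k + n + i))
          inferInstance] t →
      |(μ (s ∩ t)).toReal - (μ s).toReal * (μ t).toReal| ≤ φ n * (μ s).toReal)
    (n0 : ℕ) (hn0 : φ n0 + pbad d μ op n0 < 1) :
    (∃ c r : ℝ, 0 < c ∧ 0 < r ∧ r < 1 ∧ ∀ n, pbad d μ op n ≤ c * r ^ n) ∧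
    Summable (fun n => Real.sqrt (pbad d μ op (n / 2))) := by
  have hhom := fun e => (hop e).2
  have hdecay := exists_geometric_bound_of_le_mul (antitone_pbad hhom)
    (fun _ => ENNReal.toReal_nonneg) measureReal_le_one hn0
    fun n => (add_assoc n n0 n0).symm ▸ pbad_add_add_le hshift hhom hmeas hφ n n0 n0
  refine ⟨hdecay, ?_⟩
  obtain ⟨c, r, -, hr0, hr1, hbound⟩ := hdecay
  exact summable_sqrt_comp_div_two_of_le_geometric hr0.le hr1 hbound

/-- If the sequence is stationary, `φ` bounds the `φ`-mixing coefficients, the rank-1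
events are measurable with respect to the corresponding coordinate windows, and
`φ_{n₀} + P(rk(A_{n₀}⋯A_1) ≠ 1) < 1` for some `n₀`, then `P(rk(A_n⋯A_1) ≠ 1)`
decreases exponentially fast; in particular `Σ_n √(P(rk(A_{⌊n/2⌋}⋯A_1) ≠ 1)) < ∞`. -/
theorem rank1_probability_exponential_decay {E : Type*} [MeasurableSpace E]
    {d : ℕ} [NeZero d]
    (μ : Measure (ℕ → E)) [IsProbabilityMeasure μ]
    (hshift : MeasurePreserving (fun ω (n : ℕ) => ω (n + 1)) μ μ)
    (op : E → (Fin d → ℝ) → (Fin d → ℝ)) (hop : ∀ e, Topical d (op e))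
    (hmeas : ∀ s n : ℕ,
      MeasurableSet[MeasurableSpace.comap (fun ω (i : ℕ) => ω (s + i))
          inferInstance]
        {ω : ℕ → E | ¬ Rank1 d (compOp (fun m => op (ω m)) s n)})
    (φ : ℕ → ℝ) (hφ0 : ∀ n, 0 ≤ φ n)
    (hφ : ∀ (k n : ℕ) (s t : Set (ℕ → E)),
      MeasurableSet[MeasurableSpace.comap (fun ω (i : Fin k) => ω i)
          inferInstance] s →
      MeasurableSet[MeasurableSpace.comap (fun ω (i : ℕ) => ω (k + n + i))
          inferInstance] t →
      |(μ (s ∩ t)).toReal - (μ s).toReal * (μ t).toReal| ≤ φ n * (μ s).toReal)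
    (n0 : ℕ) (hn0 : φ n0 + pbad d μ op n0 < 1) :
    (∃ c r : ℝ, 0 < c ∧ 0 < r ∧ r < 1 ∧ ∀ n, pbad d μ op n ≤ c * r ^ n) ∧
    Summable (fun n => Real.sqrt (pbad d μ op (n / 2))) :=
  rank1_probability_exponential_decay_general μ hshift op hop hmeas φ hφ n0 hn0
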